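/- (MacWilliams identities for second-order weight distributions.) Let U and V be linear subspaces of F_q^n, and let U^⊥, V^⊥ be their orthogonal complements with respect to the standard bilinear form u·v = Σ_i u_i v_i. Define the (q+2)×(q+2) matrix K = (K_{S,T})_{S,T∈S} by K_{S,T} = |S| if T ⊆ S^⊥ (where S^⊥ = {w ∈ F_q^2 : s·w = 0 for all s ∈ S}) and K_{S,T} = −1 otherwise. Then W_{U^⊥, V^⊥}(x) = (1/(|U|·|V|)) · W_{U,V}(xK), where xK denotes the vector of linear forms ((xK)_T)_{T∈S} with (xK)_T = Σ_{S∈S} x_S K_{S,T}. -/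

import Mathlib

/-! Fix a nontrivial additive character `ψ : F → ℂ`. For a pair `(s, t)` and an orbit `S`, the sum
of `ψ (s * p.1 + t * p.2)` over `p ∈ S` is exactly `K S (orbit of (s, t))`: it is `|S|` when `S` is
orthogonal to `(s, t)`, and otherwise `S` is a free `Fˣ`-orbit on which the sum becomes
`∑ a : Fˣ, ψ (a * c) = -1` for some `c ≠ 0`. So substituting `xK` turns each coordinate factor of
`W_{U,V}` into `∑ p, ψ (u i * p.1 + v i * p.2) • X (orbit of p)`. Expanding the product over the
coordinates and summing over `u ∈ U`, `v ∈ V`, the orthogonality relation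
`∑ u ∈ U, ψ (u ⬝ᵥ w) = |U| * [w ∈ U^⊥]` leaves `|U| |V| W_{U^⊥,V^⊥}`. The computation takes place
over `ℂ` and descends to `ℚ` because `MvPolynomial.map (algebraMap ℚ ℂ)` is injective. -/

open scoped Classical
open Finset MvPolynomial

noncomputable section

variable {F : Type} [Field F] [Fintype F]

/-- The set of orbits of the action of `Fˣ` on `F × F` by scalar multiplication. -/
abbrev Orb (F : Type) [Field F] [Fintype F] : Type :=
  Quotient (MulAction.orbitRel Fˣ (F × F))

/-- The orbit of the pair `(a, b)`. -/
def orbOf (a b : F) : Orb F := Quotient.mk (MulAction.orbitRel Fˣ (F × F)) (a, b)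

/-- The second-order weight of a pair of vectors. -/
def sw {ι : Type} [Fintype ι] (u v : ι → F) (S : Orb F) : ℕ :=
  (Finset.univ.filter (fun i => orbOf (u i) (v i) = S)).card

/-- The second-order weight distribution. -/
def A2 {ι : Type} [Fintype ι] (U V : Finset (ι → F)) (w : Orb F → ℕ) : ℕ :=
  ((U ×ˢ V).filter (fun p => sw p.1 p.2 = w)).card

/-- The second-order weight enumerator. -/
def W2 {ι : Type} [Fintype ι] (U V : Finset (ι → F)) : MvPolynomial (Orb F) ℚ :=
  ∑ u ∈ U, ∑ v ∈ V, ∏ S : Orb F, (X S) ^ sw u v S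

/-- The monomial map `ξ_{c,σ}`. -/
def monoMap {ι : Type} (c : ι → Fˣ) (σ : Equiv.Perm ι) (v : ι → F) : ι → F :=
  fun i => (c i : F) * v (σ.symm i)

/-- The orbit of `S`, as a set of pairs. -/
def orbSet (S : Orb F) : Set (F × F) := {w | orbOf w.1 w.2 = S}

/-- The MacWilliams-type matrix `K`. -/
def Kmat (S T : Orb F) : ℚ :=
  if ∀ w ∈ orbSet T, ∀ s ∈ orbSet S, s.1 * w.1 + s.2 * w.2 = 0
  then ((orbSet S).ncard : ℚ) else -1

/-- The orthogonal set of a code. -/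
def orthW {n : ℕ} (U : Finset (Fin n → F)) : Finset (Fin n → F) :=
  Finset.univ.filter (fun v' => ∀ v ∈ U, (∑ i, v i * v' i) = 0)

lemma sum_units_eq_sum_sub {G₀ M : Type*} [GroupWithZero G₀] [Fintype G₀] [AddCommGroup M]
    (f : G₀ → M) : ∑ a : G₀ˣ, f a = ∑ x, f x - f 0 := by
  rw [Fintype.sum_eq_add_sum_compl (0 : G₀), add_sub_cancel_left,
    Finset.sum_subtype (p := fun x : G₀ => x ≠ 0) _ (by simp)]
  exact Fintype.sum_equiv unitsEquivNeZero _ _ (fun _ => rfl)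

namespace AddChar

lemma map_finsetSum {A M ι : Type*} [AddCommMonoid A] [CommMonoid M] (ψ : AddChar A M)
    (s : Finset ι) (f : ι → A) : ψ (∑ i ∈ s, f i) = ∏ i ∈ s, ψ (f i) :=
  map_prod ψ.toMonoidHom (fun i => Multiplicative.ofAdd (f i)) s

variable {K R : Type*} [Field K] [CommRing R] {ψ : AddChar K R}

lemma compAddMonoidHom_linearMap_eq_zero_iff {M : Type*} [AddCommGroup M] [Module K M]
    (hψ : ψ ≠ 1) (f : M →ₗ[K] K) : ψ.compAddMonoidHom f.toAddMonoidHom = 0 ↔ f = 0 := by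
  refine ⟨fun h => ?_, fun h => by ext; simp [h]⟩
  by_contra hf
  obtain ⟨m, hm⟩ : ∃ m, f m ≠ 0 := by simpa [LinearMap.ext_iff] using hf
  obtain ⟨a, ha⟩ := ne_one_iff.mp hψ
  apply ha
  simpa [hm] using DFunLike.congr_fun h ((a / f m) • m)

variable [IsDomain R]

lemma sum_linearMap {M : Type*} [AddCommGroup M] [Module K M] [Fintype M]
    (hψ : ψ ≠ 1) (f : M →ₗ[K] K) :
    ∑ m, ψ (f m) = if f = 0 then (Fintype.card M : R) else 0 := by
  simpa [compAddMonoidHom_linearMap_eq_zero_iff hψ] using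
    sum_eq_ite (ψ.compAddMonoidHom f.toAddMonoidHom)

lemma sum_units_mul [Fintype K] (hψ : ψ ≠ 1) {c : K} (hc : c ≠ 0) :
    ∑ a : Kˣ, ψ (a * c) = -1 := by
  have hsum : ∑ x : K, ψ (x * c) = 0 := by
    simpa [hc] using sum_mulShift c (IsPrimitive.of_ne_one hψ)
  rw [sum_units_eq_sum_sub (fun x => ψ (x * c)), hsum, zero_mul, map_zero_eq_one, zero_sub]

end AddChar

lemma orbOf_eq_orbOf_iff {a b c d : F} :
    orbOf a b = orbOf c d ↔ ∃ g : Fˣ, g • (c, d) = (a, b) := by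
  rw [orbOf, orbOf, Quotient.eq, MulAction.orbitRel_apply, MulAction.mem_orbit_iff]

lemma filter_orbOf_eq_image (p₀ : F × F) :
    univ.filter (fun p : F × F => orbOf p.1 p.2 = orbOf p₀.1 p₀.2)
      = univ.image (fun a : Fˣ => a • p₀) := by
  ext p
  simp [orbOf_eq_orbOf_iff]

lemma sum_filter_orbOf_eq_sum_units {M : Type*} [AddCommMonoid M] {p₀ : F × F} (hp₀ : p₀ ≠ 0)
    (f : F × F → M) :
    ∑ p ∈ univ.filter (fun p : F × F => orbOf p.1 p.2 = orbOf p₀.1 p₀.2), f p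
      = ∑ a : Fˣ, f (a • p₀) := by
  rw [filter_orbOf_eq_image, sum_image]
  intro a _ b _ hab
  exact Units.val_injective (smul_left_injective F hp₀ hab)

lemma forall_mem_orbSet_orbOf_iff (S : Orb F) (s t : F) :
    (∀ w ∈ orbSet (orbOf s t), ∀ p ∈ orbSet S, p.1 * w.1 + p.2 * w.2 = 0)
      ↔ ∀ p ∈ orbSet S, s * p.1 + t * p.2 = 0 := by
  refine ⟨fun h p hp => by linear_combination h (s, t) rfl p hp, ?_⟩
  rintro h ⟨w₁, w₂⟩ hw p hp
  obtain ⟨a, ha⟩ := orbOf_eq_orbOf_iff.mp hw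
  simp only [Prod.smul_mk, Units.smul_def, smul_eq_mul, Prod.mk.injEq] at ha
  rw [← ha.1, ← ha.2]
  linear_combination (a : F) * h p hp

lemma orbSet_eq_coe_filter (S : Orb F) :
    orbSet S = ↑(univ.filter (fun p : F × F => orbOf p.1 p.2 = S)) := by
  ext p
  simp [orbSet]

lemma sum_orbit_char_eq_Kmat {R : Type*} [Field R] {ψ : AddChar F R} (hψ : ψ ≠ 1)
    (S : Orb F) (s t : F) :
    ∑ p ∈ univ.filter (fun p : F × F => orbOf p.1 p.2 = S), ψ (s * p.1 + t * p.2)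
      = Kmat S (orbOf s t) := by
  simp only [Kmat, forall_mem_orbSet_orbOf_iff]
  split_ifs with h
  · have hψ1 : ∀ p ∈ univ.filter (fun p : F × F => orbOf p.1 p.2 = S),
        ψ (s * p.1 + t * p.2) = 1 := fun p hp => by
      rw [h p (by simpa [orbSet] using hp), AddChar.map_zero_eq_one]
    rw [sum_congr rfl hψ1, sum_const, nsmul_one, orbSet_eq_coe_filter, Set.ncard_coe_finset,
      Rat.cast_natCast]
  · push Not at h
    obtain ⟨p₀, rfl, hc⟩ := h
    have hp₀ : p₀ ≠ 0 := by rintro rfl; simp at hc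
    rw [sum_filter_orbOf_eq_sum_units hp₀]
    have hψa (a : Fˣ) : ψ (s * (a • p₀).1 + t * (a • p₀).2) = ψ (a * (s * p₀.1 + t * p₀.2)) := by
      simp only [Prod.smul_fst, Prod.smul_snd, Units.smul_def, smul_eq_mul]
      congr 1
      ring
    rw [Fintype.sum_congr _ _ hψa, AddChar.sum_units_mul hψ hc, Rat.cast_neg, Rat.cast_one]

section Fourier

variable {R : Type*} [CommRing R] [IsDomain R] {ψ : AddChar F R}

lemma sum_char_dotProduct {ι : Type*} [Fintype ι] [DecidableEq ι] (hψ : ψ ≠ 1)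
    (U : Submodule F (ι → F)) (w : ι → F) :
    ∑ u ∈ (U : Set (ι → F)).toFinset, ψ (u ⬝ᵥ w)
      = if ∀ u ∈ U, u ⬝ᵥ w = 0 then (Nat.card U : R) else 0 := by
  rw [Finset.sum_subtype (p := (· ∈ U)) _ (by simp), Nat.card_eq_fintype_card]
  have hf : dotProductEquiv F ι w ∘ₗ U.subtype = 0 ↔ ∀ u ∈ U, u ⬝ᵥ w = 0 := by
    simp [LinearMap.ext_iff, dotProduct_comm w]
  simpa [hf, dotProduct_comm w] using
    AddChar.sum_linearMap hψ (dotProductEquiv F ι w ∘ₗ U.subtype)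

lemma mem_orthW {n : ℕ} (U : Submodule F (Fin n → F)) (w : Fin n → F) :
    w ∈ orthW (U : Set (Fin n → F)).toFinset ↔ ∀ u ∈ U, u ⬝ᵥ w = 0 := by
  simp [orthW, dotProduct]

variable {M : Type*} [AddCommGroup M] [Module R M]

lemma sum_submodule_sum_char_smul {n : ℕ} (hψ : ψ ≠ 1) (U : Submodule F (Fin n → F))
    (Φ : (Fin n → F) → M) :
    ∑ u ∈ (U : Set (Fin n → F)).toFinset, ∑ w, ψ (u ⬝ᵥ w) • Φ w
      = (Nat.card U : R) • ∑ w ∈ orthW (U : Set (Fin n → F)).toFinset, Φ w := by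
  rw [sum_comm]
  simp_rw [← Finset.sum_smul, sum_char_dotProduct hψ, ite_smul, zero_smul, ← mem_orthW,
    sum_ite_mem, univ_inter, Finset.smul_sum]

lemma sum_submodule_pair_sum_char_smul {n : ℕ} (hψ : ψ ≠ 1) (U V : Submodule F (Fin n → F))
    (Φ : (Fin n → F) → (Fin n → F) → M) :
    ∑ u ∈ (U : Set (Fin n → F)).toFinset, ∑ v ∈ (V : Set (Fin n → F)).toFinset,
        ∑ w, ∑ z, (ψ (u ⬝ᵥ w) * ψ (v ⬝ᵥ z)) • Φ w z
      = ((Nat.card U : R) * Nat.card V) • ∑ w ∈ orthW (U : Set (Fin n → F)).toFinset,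
          ∑ z ∈ orthW (V : Set (Fin n → F)).toFinset, Φ w z := by
  calc _ = ∑ u ∈ (U : Set (Fin n → F)).toFinset, ∑ w, ψ (u ⬝ᵥ w) •
        ∑ v ∈ (V : Set (Fin n → F)).toFinset, ∑ z, ψ (v ⬝ᵥ z) • Φ w z := by
        simp_rw [Finset.smul_sum, mul_smul]
        exact sum_congr rfl fun u _ => sum_comm
    _ = _ := by
        simp_rw [sum_submodule_sum_char_smul hψ, ← Finset.smul_sum, mul_smul]

end Fourier

lemma prod_sum_char_smul {R A ι : Type*} [CommRing R] [CommRing A] [Algebra R A] [Fintype ι]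
    [DecidableEq ι] (ψ : AddChar F R) (u v : ι → F) (φ : F × F → A) :
    ∏ i, ∑ p : F × F, ψ (u i * p.1 + v i * p.2) • φ p
      = ∑ w, ∑ z, (ψ (u ⬝ᵥ w) * ψ (v ⬝ᵥ z)) • ∏ i, φ (w i, z i) := by
  rw [Fintype.prod_sum, ← (Equiv.arrowProdEquivProdArrow ι _ _).symm.sum_comp,
    Fintype.sum_prod_type]
  refine sum_congr rfl fun w _ => sum_congr rfl fun z _ => ?_
  simp only [Equiv.arrowProdEquivProdArrow, Equiv.coe_fn_symm_mk, prod_smul, dotProduct,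
    AddChar.map_finsetSum, ← prod_mul_distrib, AddChar.map_add_eq_mul]

lemma prod_pow_sw {M : Type*} {ι : Type} [CommMonoid M] [Fintype ι] (u v : ι → F)
    (f : Orb F → M) :
    ∏ S, f S ^ sw u v S = ∏ i, f (orbOf (u i) (v i)) := by
  rw [← prod_fiberwise univ (fun i => orbOf (u i) (v i))]
  refine prod_congr rfl fun S _ => ?_
  rw [prod_congr rfl fun i hi => congrArg f (mem_filter.mp hi).2, prod_const, sw]

lemma aeval_W2 {A : Type*} {ι : Type} [CommSemiring A] [Algebra ℚ A] [Fintype ι]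
    (f : Orb F → A) (U V : Finset (ι → F)) :
    aeval f (W2 U V) = ∑ u ∈ U, ∑ v ∈ V, ∏ i, f (orbOf (u i) (v i)) := by
  simp only [W2, map_sum, map_prod, aeval_X, prod_pow_sw]

lemma map_sum_Kmat_mul_X {R : Type*} [Field R] [CharZero R] {ψ : AddChar F R} (hψ : ψ ≠ 1)
    (s t : F) :
    map (algebraMap ℚ R) (∑ S, C (Kmat S (orbOf s t)) * X S)
      = ∑ p : F × F, ψ (s * p.1 + t * p.2) • X (orbOf p.1 p.2) := by
  rw [← sum_fiberwise univ (fun p : F × F => orbOf p.1 p.2)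
    (fun p => ψ (s * p.1 + t * p.2) • (X (orbOf p.1 p.2) : MvPolynomial (Orb F) R))]
  simp only [map_sum, map_mul, map_C, map_X]
  refine sum_congr rfl fun S _ => ?_
  rw [sum_congr rfl fun p hp => by rw [(mem_filter.mp hp).2], ← Finset.sum_smul,
    sum_orbit_char_eq_Kmat hψ, smul_eq_C_mul, eq_ratCast]

lemma primitiveChar_to_Complex_ne_one : AddChar.FiniteField.primitiveChar_to_Complex F ≠ 1 := by
  simpa using AddChar.FiniteField.primitiveChar_to_Complex_isPrimitive F one_ne_zero

lemma aeval_Kmat_W2 {n : ℕ} (U V : Submodule F (Fin n → F)) :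
    aeval (fun T : Orb F => ∑ S : Orb F, C (Kmat S T) * X S)
        (W2 ((U : Set (Fin n → F)).toFinset) ((V : Set (Fin n → F)).toFinset))
      = C ((Nat.card U : ℚ) * Nat.card V)
        * W2 (orthW ((U : Set (Fin n → F)).toFinset)) (orthW ((V : Set (Fin n → F)).toFinset)) := by
  have hψ := primitiveChar_to_Complex_ne_one (F := F)
  apply map_injective (algebraMap ℚ ℂ) (algebraMap ℚ ℂ).injective
  rw [aeval_W2, map_mul, map_C, ← aeval_X_left_apply (W2 _ _), aeval_W2]
  simp only [map_sum, map_prod, map_X, map_sum_Kmat_mul_X hψ, prod_sum_char_smul]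
  rw [sum_submodule_pair_sum_char_smul hψ, smul_eq_C_mul]
  simp only [map_mul, map_natCast]

/-- MacWilliams identities for second-order weight enumerators. -/
theorem stmt_7 {F : Type} [Field F] [Fintype F] {n : ℕ}
    (U V : Submodule F (Fin n → F)) :
    W2 (orthW ((U : Set (Fin n → F)).toFinset)) (orthW ((V : Set (Fin n → F)).toFinset))
      = C (1 / ((Nat.card U : ℚ) * (Nat.card V : ℚ)))
        * MvPolynomial.aeval (fun T : Orb F => ∑ S : Orb F, C (Kmat S T) * X S)
            (W2 ((U : Set (Fin n → F)).toFinset) ((V : Set (Fin n → F)).toFinset)) := by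
  have hcard : (Nat.card U : ℚ) * Nat.card V ≠ 0 := by simp
  rw [aeval_Kmat_W2, ← mul_assoc, ← C_mul, one_div, inv_mul_cancel₀ hcard, C_1, one_mul]
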